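/- arXiv:2101.08420 — 6 statements merged into one kernel-verified Lean document; each statement's English description precedes it below -/
import Mathlib

section
/- Let G=(V,E,W) be a finite graph with symmetric weights and, for each ordered pair (i,j) with (i,j)∈E, let f_ij: ℝ→ℝ be a function admitting an antiderivative F_ij (i.e. F_ij' = f_ij). Suppose H: ℝ^N × ℝ^N → ℝ is differentiable and satisfies, for every (ρ,S) ∈ ℝ^N × ℝ^N and every i ∈ V, ∂H/∂S_i (ρ,S) = Σ_{j∈N(i)} [ w_ij f_ij(S_i − S_j) ρ_j − w_ji f_ji(S_j − S_i) ρ_i ]. Then there exists a function 𝒱: ℝ^N → ℝ such that H(ρ,S) = Σ_{i∈V} Σ_{j∈N(i)} ρ_i F_ji(S_j − S_i) w_ji + 𝒱(ρ) for all (ρ,S). -/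
/-!
Differentiating the edge potential `Φ(ρ, S) = Σ_i Σ_{j ∈ N(i)} ρ_i F_ji(S_j − S_i) w_ji` in `S_k`,
the terms with `i = k` give `−Σ_{j ∈ N(k)} w_jk f_jk(S_j − S_k) ρ_k` and, after swapping `i` and `j`
(adjacency is symmetric), the terms with `j = k` give `Σ_{j ∈ N(k)} w_kj f_kj(S_k − S_j) ρ_j`:
exactly the prescribed `∂H/∂S_k`. So `H − Φ` has vanishing partial derivatives in `S`, and
changing one coordinate of `S` at a time shows that it depends on `ρ` alone.
-/

open Finset Function

theorem apply_eq_of_forall_apply_update_eq {ι α β : Type*} [Fintype ι] [DecidableEq ι]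
    {g : (ι → α) → β} (hg : ∀ S i a, g (update S i a) = g S) (S T : ι → α) : g T = g S := by
  have key : ∀ s : Finset ι, g (s.piecewise T S) = g S := by
    intro s
    induction s using Finset.induction with
    | empty => rw [piecewise_empty]
    | insert a s _ ih => rw [piecewise_insert, hg, ih]
  simpa using key univ

theorem apply_eq_of_hasDerivAt_update_zero {ι 𝕜 E : Type*} [Fintype ι] [DecidableEq ι]
    [RCLike 𝕜] [NormedAddCommGroup E] [NormedSpace 𝕜 E] {g : (ι → 𝕜) → E}
    (hg : ∀ S i, HasDerivAt (fun x => g (update S i x)) 0 (S i)) (S T : ι → 𝕜) :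
    g T = g S := by
  refine apply_eq_of_forall_apply_update_eq (fun S i a => ?_) S T
  have hderiv : ∀ x, HasDerivAt (fun y => g (update S i y)) 0 x := fun x => by
    simpa using hg (update S i x) i
  simpa using is_const_of_deriv_eq_zero (fun x => (hderiv x).differentiableAt)
    (fun x => (hderiv x).deriv) a (S i)

theorem SimpleGraph.sum_sum_neighborFinset_comm {V M : Type*} [Fintype V] [AddCommMonoid M]
    (G : SimpleGraph V) [DecidableRel G.Adj] (a : V → V → M) :
    ∑ i, ∑ j ∈ G.neighborFinset i, a i j = ∑ i, ∑ j ∈ G.neighborFinset i, a j i := by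
  simp_rw [SimpleGraph.neighborFinset_eq_filter, sum_filter]
  rw [sum_comm]
  simp_rw [G.adj_comm]

section EdgePotential

variable {V : Type*} [Fintype V] (G : SimpleGraph V) [DecidableRel G.Adj]
  (w : V → V → ℝ) (F : V → V → ℝ → ℝ)

def edgePotential (ρ S : V → ℝ) : ℝ :=
  ∑ i, ∑ j ∈ G.neighborFinset i, ρ i * F j i (S j - S i) * w j i

theorem hasDerivAt_edgePotential_update [DecidableEq V] {f : V → V → ℝ → ℝ}
    (hF : ∀ i j x, HasDerivAt (F i j) (f i j x) x) (ρ S : V → ℝ) (k : V) :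
    HasDerivAt (fun x => edgePotential G w F ρ (update S k x))
      (∑ j ∈ G.neighborFinset k,
        (w k j * f k j (S k - S j) * ρ j - w j k * f j k (S j - S k) * ρ k)) (S k) := by
  have hS : ∀ i, HasDerivAt (fun x => update S k x i) (if i = k then 1 else 0) (S k) := by
    intro i
    rcases eq_or_ne i k with rfl | hik
    · simpa using hasDerivAt_id' (S i)
    · simpa [hik] using hasDerivAt_const (S k) (S i)
  have hterm : ∀ i j, HasDerivAt (fun x => ρ i * F j i (update S k x j - update S k x i) * w j i)
      (ρ i * (f j i (S j - S i) * ((if j = k then 1 else 0) - if i = k then 1 else 0)) * w j i)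
      (S k) := fun i j =>
    (((hF j i (S j - S i)).comp_of_eq (S k) ((hS j).fun_sub (hS i)) (by simp)).const_mul
      (ρ i)).mul_const (w j i)
  refine (HasDerivAt.fun_sum fun i _ => HasDerivAt.fun_sum fun j _ => hterm i j).congr_deriv ?_
  simp_rw [mul_sub, sub_mul, sum_sub_distrib]
  rw [G.sum_sum_neighborFinset_comm]
  simp only [mul_ite, mul_one, mul_zero, ite_mul, zero_mul, sum_ite_irrel, sum_const_zero,
    sum_ite_eq', mem_univ, ↓reduceIte]
  congr 1 <;> exact sum_congr rfl fun _ _ => by ring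

end EdgePotential

theorem hamiltonian_structure_on_graph_general {N : ℕ}
    (G : SimpleGraph (Fin N)) [DecidableRel G.Adj]
    (w : Fin N → Fin N → ℝ)
    (f F : Fin N → Fin N → ℝ → ℝ)
    (hF : ∀ i j x, HasDerivAt (F i j) (f i j x) x)
    (H : (Fin N → ℝ) → (Fin N → ℝ) → ℝ)
    (hHS : ∀ (ρ S : Fin N → ℝ) (i : Fin N),
      HasDerivAt (fun x => H ρ (Function.update S i x))
        (∑ j ∈ G.neighborFinset i,
          (w i j * f i j (S i - S j) * ρ j - w j i * f j i (S j - S i) * ρ i)) (S i)) :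
    ∃ 𝒱 : (Fin N → ℝ) → ℝ, ∀ ρ S : Fin N → ℝ,
      H ρ S = ∑ i, ∑ j ∈ G.neighborFinset i, ρ i * F j i (S j - S i) * w j i + 𝒱 ρ := by
  refine ⟨fun ρ => H ρ 0 - edgePotential G w F ρ 0, fun ρ S => ?_⟩
  have hdiff_const : H ρ S - edgePotential G w F ρ S = H ρ 0 - edgePotential G w F ρ 0 :=
    apply_eq_of_hasDerivAt_update_zero (g := fun S => H ρ S - edgePotential G w F ρ S)
      (fun S i => by
        simpa only [sub_self] using
          (hHS ρ S i).fun_sub (hasDerivAt_edgePotential_update G w F hF ρ S i)) 0 S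
  change H ρ S = edgePotential G w F ρ S + _
  linarith

/-- On a finite weighted graph, if the partial derivatives of a differentiable
Hamiltonian `H` with respect to the `S`-variables coincide with the right-hand side of the
generalized master equation built from rate functions `f_ij` with antiderivatives `F_ij`,
then `H` has the form `Σ_i Σ_{j ∈ N(i)} ρ_i F_{ji}(S_j − S_i) w_{ji} + 𝒱(ρ)`. -/
theorem hamiltonian_structure_on_graph {N : ℕ}
    (G : SimpleGraph (Fin N)) [DecidableRel G.Adj]
    (w : Fin N → Fin N → ℝ)
    (hw_symm : ∀ i j, w i j = w j i)
    (hw_pos : ∀ i j, G.Adj i j → 0 < w i j)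
    (hw_zero : ∀ i j, ¬ G.Adj i j → w i j = 0)
    (f F : Fin N → Fin N → ℝ → ℝ)
    (hF : ∀ i j x, HasDerivAt (F i j) (f i j x) x)
    (H : (Fin N → ℝ) → (Fin N → ℝ) → ℝ)
    (hHdiff : Differentiable ℝ (fun p : (Fin N → ℝ) × (Fin N → ℝ) => H p.1 p.2))
    (hHS : ∀ (ρ S : Fin N → ℝ) (i : Fin N),
      HasDerivAt (fun x => H ρ (Function.update S i x))
        (∑ j ∈ G.neighborFinset i,
          (w i j * f i j (S i - S j) * ρ j - w j i * f j i (S j - S i) * ρ i)) (S i)) :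
    ∃ 𝒱 : (Fin N → ℝ) → ℝ, ∀ ρ S : Fin N → ℝ,
      H ρ S = ∑ i, ∑ j ∈ G.neighborFinset i, ρ i * F j i (S j - S i) * w j i + 𝒱 ρ :=
  hamiltonian_structure_on_graph_general G w f F hF H hHS
end

section
/- Let G=(V,E,W) be a finite graph with symmetric weights and θ: ℝ² → ℝ a C¹ function with θ(a,b)=θ(b,a); write θ_ij(ρ) = θ(ρ_i,ρ_j). Let (ρ(t),S(t)) be a C¹ solution on an interval of the discrete Wasserstein–Hamiltonian flow ρ̇_i = −Σ_{j∈N(i)} w_ij (S_j − S_i) θ_ij(ρ), Ṡ_i = −(1/2) Σ_{j∈N(i)} w_ij (S_i − S_j)² ∂θ_ij(ρ)/∂ρ_i. Then both the total mass Σ_{i∈V} ρ_i(t) and the Hamiltonian ℋ(ρ(t),S(t)) = (1/4) Σ_{(i,j)∈E} (S_i(t) − S_j(t))² θ_ij(ρ(t)) w_ij (sum over ordered pairs of adjacent vertices) are constant in t. -/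
/-!
The flow is Hamilton's equation for `ℋ`: `ρ̇ᵢ = ∂ℋ/∂Sᵢ` and `Ṡᵢ = -∂ℋ/∂ρᵢ`, so
`dℋ/dt = Σᵢ (∂ℋ/∂ρᵢ ρ̇ᵢ + ∂ℋ/∂Sᵢ Ṡᵢ) = 0`. Computing the partial derivatives of `ℋ` uses the
symmetry of `w` and `θ` to fold the sum over ordered pairs `(i, j)` onto its first index (a discrete
Green identity). The same identity with the constant test function `1` shows `Σᵢ ∂ℋ/∂Sᵢ = 0`,
which is conservation of mass.
-/

open Finset

theorem IsOpen.eq_of_hasDerivAt_zero {𝕜 E : Type*} [RCLike 𝕜] [NormedAddCommGroup E]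
    [NormedSpace 𝕜 E] {f : 𝕜 → E} {s : Set 𝕜} (hs : IsOpen s) (hs' : IsPreconnected s)
    (hf : ∀ x ∈ s, HasDerivAt f 0 x) {x y : 𝕜} (hx : x ∈ s) (hy : y ∈ s) : f x = f y :=
  hs.is_const_of_deriv_eq_zero hs' (fun z hz => (hf z hz).differentiableAt.differentiableWithinAt)
    (fun z hz => (hf z hz).deriv) hx hy

theorem HasDerivAt.comp_prodMk_of_partials {𝕜 E : Type*} [NontriviallyNormedField 𝕜]
    [NormedAddCommGroup E] [NormedSpace 𝕜 E] {f : 𝕜 × 𝕜 → E} {c d : 𝕜 → 𝕜}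
    {c' d' t : 𝕜} {f₁ f₂ : E} (hf : DifferentiableAt 𝕜 f (c t, d t))
    (h₁ : HasDerivAt (fun x => f (x, d t)) f₁ (c t))
    (h₂ : HasDerivAt (fun y => f (c t, y)) f₂ (d t))
    (hc : HasDerivAt c c' t) (hd : HasDerivAt d d' t) :
    HasDerivAt (fun τ => f (c τ, d τ)) (c' • f₁ + d' • f₂) t := by
  set L := fderiv 𝕜 f (c t, d t)
  have hL₁ : L (1, 0) = f₁ :=
    (hf.hasFDerivAt.comp_hasDerivAt (c t)
      ((hasDerivAt_id (c t)).prodMk (hasDerivAt_const (c t) (d t)))).unique h₁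
  have hL₂ : L (0, 1) = f₂ :=
    (hf.hasFDerivAt.comp_hasDerivAt (d t)
      ((hasDerivAt_const (d t) (c t)).prodMk (hasDerivAt_id (d t)))).unique h₂
  have hv : ((c', d') : 𝕜 × 𝕜) = c' • ((1 : 𝕜), (0 : 𝕜)) + d' • ((0 : 𝕜), (1 : 𝕜)) := by
    simp
  have := hf.hasFDerivAt.comp_hasDerivAt t (hc.prodMk hd)
  rwa [hv, map_add, map_smul, map_smul, hL₁, hL₂] at this

theorem HasDerivAt.comp_of_symm_partial {θ θ₁ : ℝ → ℝ → ℝ}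
    (hθ : Differentiable ℝ (fun p : ℝ × ℝ => θ p.1 p.2)) (hθ_symm : ∀ a b, θ a b = θ b a)
    (hθ₁ : ∀ a b, HasDerivAt (fun x => θ x b) (θ₁ a b) a) {c d : ℝ → ℝ} {c' d' t : ℝ}
    (hc : HasDerivAt c c' t) (hd : HasDerivAt d d' t) :
    HasDerivAt (fun τ => θ (c τ) (d τ)) (θ₁ (c t) (d t) * c' + θ₁ (d t) (c t) * d') t := by
  have h₂ : HasDerivAt (fun y => θ (c t) y) (θ₁ (d t) (c t)) (d t) := by
    simpa only [hθ_symm _ (c t)] using hθ₁ (d t) (c t)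
  have := HasDerivAt.comp_prodMk_of_partials (f := fun p : ℝ × ℝ => θ p.1 p.2) (hθ _)
    (hθ₁ (c t) (d t)) h₂ hc hd
  simpa only [smul_eq_mul, mul_comm c', mul_comm d'] using this

namespace SimpleGraph

variable {V : Type*} [Fintype V] (G : SimpleGraph V) [DecidableRel G.Adj]

theorem sum_sum_neighborFinset_swap {M : Type*} [AddCommMonoid M] (f : V → V → M) :
    ∑ i, ∑ j ∈ G.neighborFinset i, f i j = ∑ i, ∑ j ∈ G.neighborFinset i, f j i := by
  simp only [neighborFinset_eq_filter, sum_filter]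
  rw [sum_comm]
  simp only [G.adj_comm]

theorem sum_sum_neighborFinset_add_swap {R : Type*} [Semiring R] (f : V → V → R) :
    ∑ i, ∑ j ∈ G.neighborFinset i, (f i j + f j i) = 2 * ∑ i, ∑ j ∈ G.neighborFinset i, f i j := by
  simp only [sum_add_distrib, ← G.sum_sum_neighborFinset_swap (fun i j => f j i), two_mul]

theorem sum_sum_neighborFinset_mul_sub_mul_sub {R : Type*} [CommRing R] {k : V → V → R}
    (hk : ∀ i j, k i j = k j i) (x y : V → R) :
    ∑ i, ∑ j ∈ G.neighborFinset i, k i j * (x i - x j) * (y i - y j)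
      = 2 * ∑ i, y i * ∑ j ∈ G.neighborFinset i, k i j * (x i - x j) := by
  simp only [mul_sum, ← G.sum_sum_neighborFinset_add_swap]
  refine sum_congr rfl fun i _ => sum_congr rfl fun j _ => ?_
  rw [hk j i]
  ring

end SimpleGraph

namespace WassersteinFlow

variable {V : Type*} [Fintype V] (G : SimpleGraph V) [DecidableRel G.Adj] (w : V → V → ℝ)

noncomputable def hamiltonian (θ : ℝ → ℝ → ℝ) (ρ S : V → ℝ) : ℝ :=
  (1/4) * ∑ i, ∑ j ∈ G.neighborFinset i, (S i - S j)^2 * θ (ρ i) (ρ j) * w i j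

noncomputable def partialS (θ : ℝ → ℝ → ℝ) (ρ S : V → ℝ) (i : V) : ℝ :=
  ∑ j ∈ G.neighborFinset i, w i j * (S i - S j) * θ (ρ i) (ρ j)

noncomputable def partialRho (θ₁ : ℝ → ℝ → ℝ) (ρ S : V → ℝ) (i : V) : ℝ :=
  (1/2) * ∑ j ∈ G.neighborFinset i, w i j * (S i - S j)^2 * θ₁ (ρ i) (ρ j)

variable {G w}

theorem sum_partialS_eq_zero {θ : ℝ → ℝ → ℝ} (hw : ∀ i j, w i j = w j i)
    (hθ_symm : ∀ a b, θ a b = θ b a) (ρ S : V → ℝ) : ∑ i, partialS G w θ ρ S i = 0 := by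
  have := G.sum_sum_neighborFinset_mul_sub_mul_sub (k := fun i j => w i j * θ (ρ i) (ρ j))
    (fun i j => by rw [hw, hθ_symm]) S 1
  simpa [partialS, mul_right_comm _ _ (θ _ _)] using this.symm

theorem hamiltonian_deriv_eq {θ θ₁ : ℝ → ℝ → ℝ} (hw : ∀ i j, w i j = w j i)
    (hθ_symm : ∀ a b, θ a b = θ b a) (ρ S ρ' S' : V → ℝ) :
    (1/4) * ∑ i, ∑ j ∈ G.neighborFinset i,
        (2 * (S i - S j) * (S' i - S' j) * θ (ρ i) (ρ j)
          + (S i - S j)^2 * (θ₁ (ρ i) (ρ j) * ρ' i + θ₁ (ρ j) (ρ i) * ρ' j)) * w i j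
      = ∑ i, (partialRho G w θ₁ ρ S i * ρ' i + partialS G w θ ρ S i * S' i) := by
  set k : V → V → ℝ := fun i j => w i j * θ (ρ i) (ρ j)
  set f : V → V → ℝ := fun i j => ρ' i * (w i j * (S i - S j)^2 * θ₁ (ρ i) (ρ j))
  calc _ = (1/4) * (2 * ∑ i, ∑ j ∈ G.neighborFinset i, k i j * (S i - S j) * (S' i - S' j)
          + ∑ i, ∑ j ∈ G.neighborFinset i, (f i j + f j i)) := by
        congr 1
        simp only [mul_sum (a := (2 : ℝ)), ← sum_add_distrib]
        refine sum_congr rfl fun i _ => sum_congr rfl fun j _ => ?_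
        simp only [k, f, hw j i]
        ring
    _ = (1/4) * (2 * (2 * ∑ i, S' i * ∑ j ∈ G.neighborFinset i, k i j * (S i - S j))
          + 2 * ∑ i, ∑ j ∈ G.neighborFinset i, f i j) := by
        rw [G.sum_sum_neighborFinset_mul_sub_mul_sub (fun i j => by simp only [k, hw i j, hθ_symm]),
          G.sum_sum_neighborFinset_add_swap]
    _ = _ := by
        simp only [k, f, partialS, partialRho, sum_add_distrib, mul_sum, sum_mul, mul_add]
        rw [add_comm]
        congr 1 <;> exact sum_congr rfl fun i _ => sum_congr rfl fun j _ => by ring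

theorem hasDerivAt_hamiltonian {θ θ₁ : ℝ → ℝ → ℝ} (hw : ∀ i j, w i j = w j i)
    (hθ : Differentiable ℝ (fun p : ℝ × ℝ => θ p.1 p.2)) (hθ_symm : ∀ a b, θ a b = θ b a)
    (hθ₁ : ∀ a b, HasDerivAt (fun x => θ x b) (θ₁ a b) a) {ρ S : ℝ → V → ℝ} {ρ' S' : V → ℝ}
    {t : ℝ} (hρ : ∀ i, HasDerivAt (fun τ => ρ τ i) (ρ' i) t)
    (hS : ∀ i, HasDerivAt (fun τ => S τ i) (S' i) t) :
    HasDerivAt (fun τ => hamiltonian G w θ (ρ τ) (S τ))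
      (∑ i, (partialRho G w θ₁ (ρ t) (S t) i * ρ' i + partialS G w θ (ρ t) (S t) i * S' i)) t := by
  rw [← hamiltonian_deriv_eq hw hθ_symm]
  refine .const_mul _ (.fun_sum fun i _ => .fun_sum fun j _ => ?_)
  exact (((((hS i).fun_sub (hS j)).fun_pow 2).fun_mul
    ((hρ i).comp_of_symm_partial hθ hθ_symm hθ₁ (hρ j))).mul_const (w i j)).congr_deriv
    (by push_cast; ring)

theorem neg_sum_eq_partialS (θ : ℝ → ℝ → ℝ) (ρ S : V → ℝ) (i : V) :
    - ∑ j ∈ G.neighborFinset i, w i j * (S j - S i) * θ (ρ i) (ρ j) = partialS G w θ ρ S i := by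
  rw [partialS, ← sum_neg_distrib]
  exact sum_congr rfl fun j _ => by ring

end WassersteinFlow

open WassersteinFlow in
theorem wasserstein_hamiltonian_conservation_general {N : ℕ}
    (G : SimpleGraph (Fin N)) [DecidableRel G.Adj]
    (w : Fin N → Fin N → ℝ)
    (hw_symm : ∀ i j, w i j = w j i)
    (θ θ₁ : ℝ → ℝ → ℝ)
    (hθC1 : ContDiff ℝ 1 (fun p : ℝ × ℝ => θ p.1 p.2))
    (hθ_symm : ∀ a b, θ a b = θ b a)
    (hθ₁ : ∀ a b, HasDerivAt (fun x => θ x b) (θ₁ a b) a)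
    (a b : ℝ)
    (ρ S : ℝ → Fin N → ℝ)
    (hρ : ∀ t ∈ Set.Ioo a b, ∀ i, HasDerivAt (fun τ => ρ τ i)
        (- ∑ j ∈ G.neighborFinset i, w i j * (S t j - S t i) * θ (ρ t i) (ρ t j)) t)
    (hS : ∀ t ∈ Set.Ioo a b, ∀ i, HasDerivAt (fun τ => S τ i)
        (- (1/2) * ∑ j ∈ G.neighborFinset i, w i j * (S t i - S t j)^2 * θ₁ (ρ t i) (ρ t j)) t) :
    (∀ s ∈ Set.Ioo a b, ∀ t ∈ Set.Ioo a b, ∑ i, ρ s i = ∑ i, ρ t i) ∧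
    (∀ s ∈ Set.Ioo a b, ∀ t ∈ Set.Ioo a b,
      (1/4) * ∑ i, ∑ j ∈ G.neighborFinset i, (S s i - S s j)^2 * θ (ρ s i) (ρ s j) * w i j
        = (1/4) * ∑ i, ∑ j ∈ G.neighborFinset i,
            (S t i - S t j)^2 * θ (ρ t i) (ρ t j) * w i j) := by
  have hρ' (t) (ht : t ∈ Set.Ioo a b) (i) :
      HasDerivAt (fun τ => ρ τ i) (partialS G w θ (ρ t) (S t) i) t := by
    simpa only [neg_sum_eq_partialS] using hρ t ht i
  have hS' (t) (ht : t ∈ Set.Ioo a b) (i) :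
      HasDerivAt (fun τ => S τ i) (-partialRho G w θ₁ (ρ t) (S t) i) t := by
    simpa only [partialRho, neg_mul] using hS t ht i
  constructor
  · refine fun s hs t ht => isOpen_Ioo.eq_of_hasDerivAt_zero (f := fun τ => ∑ i, ρ τ i)
      isPreconnected_Ioo (fun t ht => ?_) hs ht
    simpa only [sum_partialS_eq_zero hw_symm hθ_symm] using
      HasDerivAt.fun_sum (u := univ) fun i _ => hρ' t ht i
  · refine fun s hs t ht => isOpen_Ioo.eq_of_hasDerivAt_zero
      (f := fun τ => hamiltonian G w θ (ρ τ) (S τ)) isPreconnected_Ioo (fun t ht => ?_) hs ht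
    have := hasDerivAt_hamiltonian (G := G) hw_symm (hθC1.differentiable one_ne_zero) hθ_symm hθ₁
      (hρ' t ht) (hS' t ht)
    simpa only [mul_neg, mul_comm (partialRho _ _ _ _ _ _), add_neg_cancel, sum_const_zero]
      using this

/-- Along any C¹ solution of the discrete Wasserstein–Hamiltonian flow on a
finite weighted graph (with symmetric C¹ density weight `θ`), both the total mass
`Σ_i ρ_i(t)` and the Hamiltonian `ℋ(ρ,S) = (1/4) Σ_{(i,j)∈E} (S_i − S_j)² θ_ij(ρ) w_ij`
are constant in time. -/
theorem wasserstein_hamiltonian_conservation {N : ℕ}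
    (G : SimpleGraph (Fin N)) [DecidableRel G.Adj]
    (w : Fin N → Fin N → ℝ)
    (hw_symm : ∀ i j, w i j = w j i)
    (hw_pos : ∀ i j, G.Adj i j → 0 < w i j)
    (θ θ₁ : ℝ → ℝ → ℝ)
    (hθC1 : ContDiff ℝ 1 (fun p : ℝ × ℝ => θ p.1 p.2))
    (hθ_symm : ∀ a b, θ a b = θ b a)
    (hθ₁ : ∀ a b, HasDerivAt (fun x => θ x b) (θ₁ a b) a)
    (a b : ℝ)
    (ρ S : ℝ → Fin N → ℝ)
    (hρ : ∀ t ∈ Set.Ioo a b, ∀ i, HasDerivAt (fun τ => ρ τ i)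
        (- ∑ j ∈ G.neighborFinset i, w i j * (S t j - S t i) * θ (ρ t i) (ρ t j)) t)
    (hS : ∀ t ∈ Set.Ioo a b, ∀ i, HasDerivAt (fun τ => S τ i)
        (- (1/2) * ∑ j ∈ G.neighborFinset i, w i j * (S t i - S t j)^2 * θ₁ (ρ t i) (ρ t j)) t) :
    (∀ s ∈ Set.Ioo a b, ∀ t ∈ Set.Ioo a b, ∑ i, ρ s i = ∑ i, ρ t i) ∧
    (∀ s ∈ Set.Ioo a b, ∀ t ∈ Set.Ioo a b,
      (1/4) * ∑ i, ∑ j ∈ G.neighborFinset i, (S s i - S s j)^2 * θ (ρ s i) (ρ s j) * w i j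
        = (1/4) * ∑ i, ∑ j ∈ G.neighborFinset i,
            (S t i - S t j)^2 * θ (ρ t i) (ρ t j) * w i j) :=
  wasserstein_hamiltonian_conservation_general G w hw_symm θ θ₁ hθC1 hθ_symm hθ₁ a b ρ S hρ hS
end

section
/- Let G=(V,E,W) be a finite graph, m_ij(t) ≥ 0 continuous symmetric rates (m_ij = m_ji for edges) with m_ii(t) = −Σ_{j∈N(i)} m_ij(t). Let (ρ(t),S(t)) be a C¹ solution with ρ_i(t) > 0 of the SBP Hamiltonian system: Ṡ_i = −m_ii − (1/2) Σ_{j∈N(i)} e^{S_j−S_i} m_ij √(ρ_j/ρ_i) − (1/2) Σ_{j∈N(i)} e^{S_i−S_j} m_ji √(ρ_j/ρ_i), and ρ̇_i = Σ_{j∈N(i)} e^{S_i−S_j} m_ji √(ρ_i ρ_j) − Σ_{j∈N(i)} e^{S_j−S_i} m_ij √(ρ_i ρ_j). Define f_i(t) = √(ρ_i(t)) e^{−S_i(t)} and g_i(t) = √(ρ_i(t)) e^{S_i(t)}. Then (f,g) solves the discrete Schrödinger system: ḟ_i = Σ_{j∈N(i)} (f_j − f_i) m_ij and ġ_i = −Σ_{j∈N(i)}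 (g_j − g_i) m_ij. -/
/-!
With `f = √ρ e^{-S}` and `g = √ρ e^{S}` one has `ρ = f g`, and by the symmetry of `m` every
summand of the Hamiltonian field is `f_i g_j` or `g_i f_j` (divided by `ρ_i` in the `Ṡ` equation).
Writing `(Δu)_i = Σ_{j ∈ N(i)} (u_j - u_i) m_ij`, the system becomes
`ρ̇_i = g_i (Δf)_i - f_i (Δg)_i` and `Ṡ_i = -(f_i (Δg)_i + g_i (Δf)_i) / (2 ρ_i)`.
Since `ḟ/f = ρ̇/(2ρ) - Ṡ` and `ġ/g = ρ̇/(2ρ) + Ṡ`, this gives `ḟ = Δf` and `ġ = -Δg`.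
-/

open Real Finset

theorem HasDerivAt.sqrt_mul_exp {ρ S : ℝ → ℝ} {ρ' S' t : ℝ} (hρ : HasDerivAt ρ ρ' t)
    (hS : HasDerivAt S S' t) (hpos : 0 < ρ t) :
    HasDerivAt (fun τ => √(ρ τ) * Real.exp (S τ))
      (√(ρ t) * Real.exp (S t) * (ρ' / (2 * ρ t) + S')) t := by
  refine ((hρ.sqrt hpos.ne').mul hS.exp).congr_deriv ?_
  have hsqrt : √(ρ t) ≠ 0 := (sqrt_pos.mpr hpos).ne'
  field_simp
  rw [sq_sqrt hpos.le]
  ring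

theorem madelung_hasDerivAt_of_rates {ρ S : ℝ → ℝ} {t a b : ℝ} (hpos : 0 < ρ t)
    (hρ : HasDerivAt ρ (√(ρ t) * exp (S t) * a - √(ρ t) * exp (-S t) * b) t)
    (hS : HasDerivAt S (-(√(ρ t) * exp (-S t) * b + √(ρ t) * exp (S t) * a) / (2 * ρ t)) t) :
    HasDerivAt (fun τ => √(ρ τ) * exp (-S τ)) a t ∧
      HasDerivAt (fun τ => √(ρ τ) * exp (S τ)) (-b) t := by
  have hsqrt : √(ρ t) ≠ 0 := (sqrt_pos.mpr hpos).ne'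
  constructor
  · refine (hρ.sqrt_mul_exp hS.neg hpos).congr_deriv ?_
    rw [Pi.neg_apply, exp_neg]
    field_simp
    rw [sq_sqrt hpos.le]
    ring
  · refine (hρ.sqrt_mul_exp hS hpos).congr_deriv ?_
    rw [exp_neg]
    field_simp
    rw [sq_sqrt hpos.le]
    ring

section Hamiltonian

variable {ι : Type*} (s : Finset ι) (w : ι → ℝ) (ρ S : ι → ℝ) (i : ι)

noncomputable def madelungF (j : ι) : ℝ := √(ρ j) * exp (-S j)

noncomputable def madelungG (j : ι) : ℝ := √(ρ j) * exp (S j)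

def laplacianAt (u : ι → ℝ) : ℝ := ∑ j ∈ s, (u j - u i) * w j

variable {s w ρ S i}

theorem sbp_density_rate_eq {w' : ι → ℝ} (hw : ∀ j ∈ s, w' j = w j) (hρ : 0 ≤ ρ i) :
    ∑ j ∈ s, exp (S i - S j) * w' j * √(ρ i * ρ j) - ∑ j ∈ s, exp (S j - S i) * w j * √(ρ i * ρ j)
      = madelungG ρ S i * laplacianAt s w i (madelungF ρ S)
        - madelungF ρ S i * laplacianAt s w i (madelungG ρ S) := by
  simp only [laplacianAt, mul_sum, ← sum_sub_distrib]
  refine sum_congr rfl fun j hj => ?_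
  unfold madelungF madelungG
  rw [hw j hj, sqrt_mul hρ, exp_sub, exp_sub, exp_neg, exp_neg]
  field_simp
  ring

theorem sbp_phase_rate_eq {w' : ι → ℝ} (hw : ∀ j ∈ s, w' j = w j) (hρ : 0 < ρ i) :
    - (- ∑ j ∈ s, w j) - (1/2) * ∑ j ∈ s, exp (S j - S i) * w j * √(ρ j / ρ i)
        - (1/2) * ∑ j ∈ s, exp (S i - S j) * w' j * √(ρ j / ρ i)
      = -(madelungF ρ S i * laplacianAt s w i (madelungG ρ S)
          + madelungG ρ S i * laplacianAt s w i (madelungF ρ S)) / (2 * ρ i) := by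
  have hsqrt : √(ρ i) ≠ 0 := (sqrt_pos.mpr hρ).ne'
  simp only [laplacianAt, mul_sum, ← sum_add_distrib, neg_div, sum_div, ← sum_neg_distrib,
    neg_neg, ← sum_sub_distrib]
  refine sum_congr rfl fun j hj => ?_
  unfold madelungF madelungG
  rw [hw j hj, sqrt_div' _ hρ.le, exp_sub, exp_sub, exp_neg, exp_neg]
  field_simp
  rw [sq_sqrt hρ.le]
  ring

end Hamiltonian

theorem sbp_to_schrodinger_system_general {N : ℕ}
    (G : SimpleGraph (Fin N)) [DecidableRel G.Adj]
    (m : Fin N → Fin N → ℝ → ℝ)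
    (hm_symm : ∀ i j, G.Adj i j → ∀ t, m i j t = m j i t)
    (ρ S : ℝ → Fin N → ℝ)
    (hρ_pos : ∀ t i, 0 < ρ t i)
    (hS : ∀ t i, HasDerivAt (fun τ => S τ i)
        (- (- ∑ j ∈ G.neighborFinset i, m i j t)
          - (1/2) * ∑ j ∈ G.neighborFinset i,
              Real.exp (S t j - S t i) * m i j t * Real.sqrt (ρ t j / ρ t i)
          - (1/2) * ∑ j ∈ G.neighborFinset i,
              Real.exp (S t i - S t j) * m j i t * Real.sqrt (ρ t j / ρ t i)) t)
    (hρ : ∀ t i, HasDerivAt (fun τ => ρ τ i)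
        ((∑ j ∈ G.neighborFinset i,
            Real.exp (S t i - S t j) * m j i t * Real.sqrt (ρ t i * ρ t j))
         - ∑ j ∈ G.neighborFinset i,
            Real.exp (S t j - S t i) * m i j t * Real.sqrt (ρ t i * ρ t j)) t) :
    (∀ t i, HasDerivAt (fun τ => Real.sqrt (ρ τ i) * Real.exp (-(S τ i)))
        (∑ j ∈ G.neighborFinset i,
          (Real.sqrt (ρ t j) * Real.exp (-(S t j))
            - Real.sqrt (ρ t i) * Real.exp (-(S t i))) * m i j t) t) ∧
    (∀ t i, HasDerivAt (fun τ => Real.sqrt (ρ τ i) * Real.exp (S τ i))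
        (- ∑ j ∈ G.neighborFinset i,
          (Real.sqrt (ρ t j) * Real.exp (S t j)
            - Real.sqrt (ρ t i) * Real.exp (S t i)) * m i j t) t) := by
  have hsolution : ∀ t i,
      HasDerivAt (fun τ => √(ρ τ i) * exp (-S τ i))
          (laplacianAt (G.neighborFinset i) (m i · t) i (madelungF (ρ t) (S t))) t ∧
        HasDerivAt (fun τ => √(ρ τ i) * exp (S τ i))
          (-laplacianAt (G.neighborFinset i) (m i · t) i (madelungG (ρ t) (S t))) t := by
    intro t i
    have hsymm : ∀ j ∈ G.neighborFinset i, m j i t = m i j t := fun j hj =>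
      (hm_symm i j ((G.mem_neighborFinset i j).mp hj) t).symm
    exact madelung_hasDerivAt_of_rates (hρ_pos t i)
      ((hρ t i).congr_deriv (sbp_density_rate_eq hsymm (hρ_pos t i).le))
      ((hS t i).congr_deriv (sbp_phase_rate_eq hsymm (hρ_pos t i)))
  exact ⟨fun t i => (hsolution t i).1, fun t i => (hsolution t i).2⟩

/-- Under the Madelung transform `f_i = √ρ_i e^{−S_i}`, `g_i = √ρ_i e^{S_i}`,
any C¹ positive solution of the SBP Hamiltonian system on a finite graph with continuous,
nonnegative, symmetric rates `m_ij(t)` (and `m_ii(t) = −Σ_{j∈N(i)} m_ij(t)`) is mapped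
to a solution of the discrete Schrödinger system
`ḟ_i = Σ_{j∈N(i)} (f_j − f_i) m_ij`, `ġ_i = −Σ_{j∈N(i)} (g_j − g_i) m_ij`. -/
theorem sbp_to_schrodinger_system {N : ℕ}
    (G : SimpleGraph (Fin N)) [DecidableRel G.Adj]
    (m : Fin N → Fin N → ℝ → ℝ)
    (hm_cont : ∀ i j, Continuous (m i j))
    (hm_nonneg : ∀ i j, G.Adj i j → ∀ t, 0 ≤ m i j t)
    (hm_symm : ∀ i j, G.Adj i j → ∀ t, m i j t = m j i t)
    (ρ S : ℝ → Fin N → ℝ)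
    (hρ_pos : ∀ t i, 0 < ρ t i)
    (hS : ∀ t i, HasDerivAt (fun τ => S τ i)
        (- (- ∑ j ∈ G.neighborFinset i, m i j t)
          - (1/2) * ∑ j ∈ G.neighborFinset i,
              Real.exp (S t j - S t i) * m i j t * Real.sqrt (ρ t j / ρ t i)
          - (1/2) * ∑ j ∈ G.neighborFinset i,
              Real.exp (S t i - S t j) * m j i t * Real.sqrt (ρ t j / ρ t i)) t)
    (hρ : ∀ t i, HasDerivAt (fun τ => ρ τ i)
        ((∑ j ∈ G.neighborFinset i,
            Real.exp (S t i - S t j) * m j i t * Real.sqrt (ρ t i * ρ t j))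
         - ∑ j ∈ G.neighborFinset i,
            Real.exp (S t j - S t i) * m i j t * Real.sqrt (ρ t i * ρ t j)) t) :
    (∀ t i, HasDerivAt (fun τ => Real.sqrt (ρ τ i) * Real.exp (-(S τ i)))
        (∑ j ∈ G.neighborFinset i,
          (Real.sqrt (ρ t j) * Real.exp (-(S t j))
            - Real.sqrt (ρ t i) * Real.exp (-(S t i))) * m i j t) t) ∧
    (∀ t i, HasDerivAt (fun τ => Real.sqrt (ρ τ i) * Real.exp (S τ i))
        (- ∑ j ∈ G.neighborFinset i,
          (Real.sqrt (ρ t j) * Real.exp (S t j)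
            - Real.sqrt (ρ t i) * Real.exp (S t i)) * m i j t) t) :=
  sbp_to_schrodinger_system_general G m hm_symm ρ S hρ_pos hS hρ
end

section
/- Let G=(V,E,W) be a finite graph, m_ij(t) ≥ 0 continuous symmetric rates (m_ij = m_ji for edges). Let (ρ(t),ψ(t)) be a C¹ solution of the system ρ̇_i = Σ_{j∈N(i)} [ −e^{ψ_j−ψ_i} m_ij ρ_i + e^{ψ_i−ψ_j} m_ji ρ_j ], ψ̇_i = −Σ_{j∈N(i)} (e^{ψ_j−ψ_i} − 1) m_ij. Define f_i(t) = ρ_i(t) e^{−ψ_i(t)} and g_i(t) = e^{ψ_i(t)}. Then (f,g) solves the discrete Schrödinger system ḟ_i = Σ_{j∈N(i)} (f_j − f_i) m_ij and ġ_i = −Σ_{j∈N(i)} (g_j − g_i) m_ij. -/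
/-! The transform only uses the chain and product rules. For `g = e^ψ` one has
`ġ_i = e^{ψ_i} ψ̇_i` and `e^{ψ_i}(e^{ψ_j - ψ_i} - 1) = e^{ψ_j} - e^{ψ_i}`. For `f = ρ e^{-ψ}` one has
`ḟ_i = (ρ̇_i - ρ_i ψ̇_i) e^{-ψ_i}`; in each edge term the `e^{ψ_j - ψ_i}` contributions of `ρ̇_i` and
`ρ_i ψ̇_i` cancel, and symmetry `m_ji = m_ij` leaves `(ρ_j e^{-ψ_j} - ρ_i e^{-ψ_i}) m_ij`. -/

open Real Finset

theorem HasDerivAt.mul_exp_neg {f g : ℝ → ℝ} {f' g' t : ℝ} (hf : HasDerivAt f f' t)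
    (hg : HasDerivAt g g' t) :
    HasDerivAt (fun τ => f τ * Real.exp (-g τ)) ((f' - f t * g') * Real.exp (-g t)) t :=
  (hf.mul hg.neg.exp).congr_deriv (by rw [Pi.neg_apply]; ring)

theorem exp_mul_sum_exp_sub_sub_one_mul {ι : Type*} (s : Finset ι) (x w : ι → ℝ) (i : ι) :
    exp (x i) * ∑ j ∈ s, (exp (x j - x i) - 1) * w j = ∑ j ∈ s, (exp (x j) - exp (x i)) * w j := by
  rw [mul_sum]
  refine sum_congr rfl fun j _ => ?_
  have h : exp (x i) * exp (x j - x i) = exp (x j) := by rw [← exp_add, add_sub_cancel]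
  linear_combination w j * h

theorem sum_hopfCole_density {ι : Type*} (s : Finset ι) (x r w : ι → ℝ) (i : ι) :
    (∑ j ∈ s, (-exp (x j - x i) * w j * r i + exp (x i - x j) * w j * r j)
        - r i * -∑ j ∈ s, (exp (x j - x i) - 1) * w j) * exp (-x i)
      = ∑ j ∈ s, (r j * exp (-x j) - r i * exp (-x i)) * w j := by
  rw [mul_neg, sub_neg_eq_add, mul_sum, ← sum_add_distrib, sum_mul]
  refine sum_congr rfl fun j _ => ?_
  have h : exp (x i - x j) * exp (-x i) = exp (-x j) := by rw [← exp_add]; ring_nf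
  linear_combination (w j * r j) * h

theorem hopf_cole_to_schrodinger_system_general {N : ℕ}
    (G : SimpleGraph (Fin N)) [DecidableRel G.Adj]
    (m : Fin N → Fin N → ℝ → ℝ)
    (hm_symm : ∀ i j, G.Adj i j → ∀ t, m i j t = m j i t)
    (ρ ψ : ℝ → Fin N → ℝ)
    (hρ : ∀ t i, HasDerivAt (fun τ => ρ τ i)
        (∑ j ∈ G.neighborFinset i,
          (- Real.exp (ψ t j - ψ t i) * m i j t * ρ t i
            + Real.exp (ψ t i - ψ t j) * m j i t * ρ t j)) t)
    (hψ : ∀ t i, HasDerivAt (fun τ => ψ τ i)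
        (- ∑ j ∈ G.neighborFinset i, (Real.exp (ψ t j - ψ t i) - 1) * m i j t) t) :
    (∀ t i, HasDerivAt (fun τ => ρ τ i * Real.exp (-(ψ τ i)))
        (∑ j ∈ G.neighborFinset i,
          (ρ t j * Real.exp (-(ψ t j)) - ρ t i * Real.exp (-(ψ t i))) * m i j t) t) ∧
    (∀ t i, HasDerivAt (fun τ => Real.exp (ψ τ i))
        (- ∑ j ∈ G.neighborFinset i,
          (Real.exp (ψ t j) - Real.exp (ψ t i)) * m i j t) t) := by
  refine ⟨fun t i => ?_, fun t i => ?_⟩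
  · have hρ_symm : HasDerivAt (fun τ => ρ τ i)
        (∑ j ∈ G.neighborFinset i,
          (-exp (ψ t j - ψ t i) * m i j t * ρ t i + exp (ψ t i - ψ t j) * m i j t * ρ t j)) t := by
      convert hρ t i using 2 with j hj
      rw [hm_symm i j ((G.mem_neighborFinset i j).mp hj) t]
    simpa only [sum_hopfCole_density] using hρ_symm.mul_exp_neg (hψ t i)
  · simpa only [mul_neg, exp_mul_sum_exp_sub_sub_one_mul] using (hψ t i).exp

/-- Under the Hopf–Cole transform `f_i = ρ_i e^{−ψ_i}`, `g_i = e^{ψ_i}`,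
any C¹ solution of the critical-point system of the discrete Schrödinger bridge problem
with continuous, nonnegative, symmetric rates `m_ij(t)` is mapped to a solution of the
discrete Schrödinger system
`ḟ_i = Σ_{j∈N(i)} (f_j − f_i) m_ij`, `ġ_i = −Σ_{j∈N(i)} (g_j − g_i) m_ij`. -/
theorem hopf_cole_to_schrodinger_system {N : ℕ}
    (G : SimpleGraph (Fin N)) [DecidableRel G.Adj]
    (m : Fin N → Fin N → ℝ → ℝ)
    (hm_cont : ∀ i j, Continuous (m i j))
    (hm_nonneg : ∀ i j, G.Adj i j → ∀ t, 0 ≤ m i j t)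
    (hm_symm : ∀ i j, G.Adj i j → ∀ t, m i j t = m j i t)
    (ρ ψ : ℝ → Fin N → ℝ)
    (hρ : ∀ t i, HasDerivAt (fun τ => ρ τ i)
        (∑ j ∈ G.neighborFinset i,
          (- Real.exp (ψ t j - ψ t i) * m i j t * ρ t i
            + Real.exp (ψ t i - ψ t j) * m j i t * ρ t j)) t)
    (hψ : ∀ t i, HasDerivAt (fun τ => ψ τ i)
        (- ∑ j ∈ G.neighborFinset i, (Real.exp (ψ t j - ψ t i) - 1) * m i j t) t) :
    (∀ t i, HasDerivAt (fun τ => ρ τ i * Real.exp (-(ψ τ i)))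
        (∑ j ∈ G.neighborFinset i,
          (ρ t j * Real.exp (-(ψ t j)) - ρ t i * Real.exp (-(ψ t i))) * m i j t) t) ∧
    (∀ t i, HasDerivAt (fun τ => Real.exp (ψ τ i))
        (- ∑ j ∈ G.neighborFinset i,
          (Real.exp (ψ t j) - Real.exp (ψ t i)) * m i j t) t) :=
  hopf_cole_to_schrodinger_system_general G m hm_symm ρ ψ hρ hψ
end

section
/- Let G=(V,E,W) be a finite graph, m_ij ≥ 0 time-independent reals for edges (i,j)∈E with m_ii = −Σ_{j∈N(i)} m_ij. Suppose ρ* ∈ ℝ^N with ρ*_i > 0 and Σ_i ρ*_i = 1 is a stationary measure of the reference process, i.e. Σ_{j∈N(i)} m_ji ρ*_j + m_ii ρ*_i = 0 for every i ∈ V. Define S*_i = −(1/2) log ρ*_i. Then (ρ*, S*) is a stationary point of the SBP Hamiltonian system, i.e. both right-hand sides vanish at (ρ*,S*): Σ_{j∈N(i)} e^{S*_i−S*_j} m_ji √(ρ*_i ρ*_j) − Σ_{j∈N(i)} e^{S*_j−S*_i} m_ij √(ρ*_i ρ*_j) = 0 and −m_ii − (1/2) Σ_{j∈N(i)} e^{S*_j−S*_i}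 m_ij √(ρ*_j/ρ*_i) − (1/2) Σ_{j∈N(i)} e^{S*_i−S*_j} m_ji √(ρ*_j/ρ*_i) = 0 for every i ∈ V. -/
/-!
With `S*ᵢ = -(1/2) log ρ*ᵢ` one has `e^{S*ᵢ - S*ⱼ} = √(ρ*ⱼ / ρ*ᵢ)`, so every term of the
Hamiltonian vector field at `(ρ*, S*)` collapses to a monomial in the rates: the `ρ̇`-equation
becomes inflow minus outflow `∑ⱼ mⱼᵢ ρ*ⱼ - ∑ⱼ mᵢⱼ ρ*ᵢ` at node `i`, and the `Ṡ`-equation becomes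
`-mᵢᵢ - ½ ∑ⱼ mᵢⱼ - ½ ∑ⱼ mⱼᵢ ρ*ⱼ / ρ*ᵢ`. Both vanish by stationarity of `ρ*` together with
`mᵢᵢ = -∑ⱼ mᵢⱼ`.
-/

open Finset Real

lemma Real.exp_neg_half_mul_log_sub {a b : ℝ} (ha : 0 < a) (hb : 0 < b) :
    exp (-(1/2) * log a - -(1/2) * log b) = √(b / a) := by
  rw [← exp_log (sqrt_pos.2 (div_pos hb ha)), log_sqrt (div_pos hb ha).le,
    log_div hb.ne' ha.ne']
  ring_nf

lemma Real.sqrt_div_mul_sqrt_mul {a b : ℝ} (ha : 0 < a) (hb : 0 ≤ b) :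
    √(b / a) * √(a * b) = b := by
  rw [← sqrt_mul (div_nonneg hb ha.le), div_mul_eq_mul_div, mul_left_comm,
    mul_div_cancel_left₀ _ ha.ne', sqrt_mul_self hb]

lemma Real.sqrt_div_mul_sqrt_div_swap {a b : ℝ} (ha : 0 < a) (hb : 0 < b) :
    √(a / b) * √(b / a) = 1 := by
  rw [← sqrt_mul (div_pos ha hb).le, div_mul_div_cancel₀ hb.ne', div_self ha.ne', sqrt_one]

section Balance

variable {ι : Type*} {s : Finset ι} {m : ι → ι → ℝ} {ρ : ι → ℝ} {i : ι}

lemma inflow_eq_outflow_of_stationary (hdiag : m i i = -∑ j ∈ s, m i j)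
    (hstat : ∑ j ∈ s, m j i * ρ j + m i i * ρ i = 0) :
    ∑ j ∈ s, m j i * ρ j = ∑ j ∈ s, m i j * ρ i := by
  rw [hdiag, neg_mul] at hstat
  rw [← sum_mul]
  linarith

lemma sum_mul_div_eq_sum_of_stationary (hdiag : m i i = -∑ j ∈ s, m i j)
    (hstat : ∑ j ∈ s, m j i * ρ j + m i i * ρ i = 0) (hρ : ρ i ≠ 0) :
    ∑ j ∈ s, m j i * (ρ j / ρ i) = ∑ j ∈ s, m i j := by
  simp only [← mul_div_assoc, ← sum_div, inflow_eq_outflow_of_stationary hdiag hstat,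
    ← sum_mul, mul_div_cancel_right₀ _ hρ]

end Balance

theorem sbp_stationary_point_general {N : ℕ}
    (G : SimpleGraph (Fin N)) [DecidableRel G.Adj]
    (m : Fin N → Fin N → ℝ)
    (hm_diag : ∀ i, m i i = - ∑ j ∈ G.neighborFinset i, m i j)
    (ρstar : Fin N → ℝ)
    (hρ_pos : ∀ i, 0 < ρstar i)
    (hstat : ∀ i, (∑ j ∈ G.neighborFinset i, m j i * ρstar j) + m i i * ρstar i = 0)
    (Sstar : Fin N → ℝ)
    (hSstar : ∀ i, Sstar i = -(1/2) * Real.log (ρstar i)) :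
    (∀ i, (∑ j ∈ G.neighborFinset i,
        Real.exp (Sstar i - Sstar j) * m j i * Real.sqrt (ρstar i * ρstar j))
      - (∑ j ∈ G.neighborFinset i,
        Real.exp (Sstar j - Sstar i) * m i j * Real.sqrt (ρstar i * ρstar j)) = 0) ∧
    (∀ i, - m i i
      - (1/2) * ∑ j ∈ G.neighborFinset i,
          Real.exp (Sstar j - Sstar i) * m i j * Real.sqrt (ρstar j / ρstar i)
      - (1/2) * ∑ j ∈ G.neighborFinset i,
          Real.exp (Sstar i - Sstar j) * m j i * Real.sqrt (ρstar j / ρstar i) = 0) := by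
  have hexp : ∀ i j, exp (Sstar i - Sstar j) = √(ρstar j / ρstar i) := fun i j => by
    rw [hSstar, hSstar, exp_neg_half_mul_log_sub (hρ_pos i) (hρ_pos j)]
  refine ⟨fun i => ?_, fun i => ?_⟩
  · have inflow : ∀ j, exp (Sstar i - Sstar j) * m j i * √(ρstar i * ρstar j)
        = m j i * ρstar j := fun j => by
      rw [mul_right_comm, hexp, sqrt_div_mul_sqrt_mul (hρ_pos i) (hρ_pos j).le, mul_comm]
    have outflow : ∀ j, exp (Sstar j - Sstar i) * m i j * √(ρstar i * ρstar j)
        = m i j * ρstar i := fun j => by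
      rw [mul_right_comm, hexp, mul_comm (ρstar i),
        sqrt_div_mul_sqrt_mul (hρ_pos j) (hρ_pos i).le, mul_comm]
    simp only [inflow, outflow, inflow_eq_outflow_of_stationary (hm_diag i) (hstat i), sub_self]
  · have outgoing : ∀ j, exp (Sstar j - Sstar i) * m i j * √(ρstar j / ρstar i)
        = m i j := fun j => by
      rw [mul_right_comm, hexp, sqrt_div_mul_sqrt_div_swap (hρ_pos i) (hρ_pos j), one_mul]
    have incoming : ∀ j, exp (Sstar i - Sstar j) * m j i * √(ρstar j / ρstar i)
        = m j i * (ρstar j / ρstar i) := fun j => by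
      rw [mul_right_comm, hexp, mul_self_sqrt (div_pos (hρ_pos j) (hρ_pos i)).le, mul_comm]
    simp only [outgoing, incoming,
      sum_mul_div_eq_sum_of_stationary (hm_diag i) (hstat i) (hρ_pos i).ne', hm_diag i]
    ring

/-- If `ρ*` is a positive stationary probability measure of the reference
process (with rates `m_ij ≥ 0`, `m_ii = −Σ_{j∈N(i)} m_ij`) and `S*_i = −(1/2) log ρ*_i`,
then `(ρ*, S*)` is a stationary point of the SBP Hamiltonian system: both right-hand
sides of the system vanish there. -/
theorem sbp_stationary_point {N : ℕ}
    (G : SimpleGraph (Fin N)) [DecidableRel G.Adj]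
    (m : Fin N → Fin N → ℝ)
    (hm_nonneg : ∀ i j, G.Adj i j → 0 ≤ m i j)
    (hm_diag : ∀ i, m i i = - ∑ j ∈ G.neighborFinset i, m i j)
    (ρstar : Fin N → ℝ)
    (hρ_pos : ∀ i, 0 < ρstar i)
    (hρ_sum : ∑ i, ρstar i = 1)
    (hstat : ∀ i, (∑ j ∈ G.neighborFinset i, m j i * ρstar j) + m i i * ρstar i = 0)
    (Sstar : Fin N → ℝ)
    (hSstar : ∀ i, Sstar i = -(1/2) * Real.log (ρstar i)) :
    (∀ i, (∑ j ∈ G.neighborFinset i,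
        Real.exp (Sstar i - Sstar j) * m j i * Real.sqrt (ρstar i * ρstar j))
      - (∑ j ∈ G.neighborFinset i,
        Real.exp (Sstar j - Sstar i) * m i j * Real.sqrt (ρstar i * ρstar j)) = 0) ∧
    (∀ i, - m i i
      - (1/2) * ∑ j ∈ G.neighborFinset i,
          Real.exp (Sstar j - Sstar i) * m i j * Real.sqrt (ρstar j / ρstar i)
      - (1/2) * ∑ j ∈ G.neighborFinset i,
          Real.exp (Sstar i - Sstar j) * m j i * Real.sqrt (ρstar j / ρstar i) = 0) :=
  sbp_stationary_point_general G m hm_diag ρstar hρ_pos hstat Sstar hSstar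
end

section
/- Let G be the complete graph on n ≥ 2 vertices, T > 0, and let ρ: ℝ → ℝ^n be a C¹, T-periodic curve lying in the interior of the probability simplex, i.e. ρ_i(t) > 0 for all i and t and Σ_{i=1}^n ρ_i(t) = 1. Then there exists a continuous family Q(t) of transition rate matrices (off-diagonal entries nonnegative, each row summing to zero) such that ρ̇(t) = ρ(t) Q(t) for all t; in other words, every smooth periodic interior density trajectory on a fully connected graph is realized as the marginal law of a time-inhomogeneous Markov process. -/
/-!
Write `v = ρ̇`. Since `∑ ρ = 1`, the velocity has `∑ v = 0`. For `c ≥ ∑ⱼ |vⱼ| / ρⱼ` the matrix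
`Q = 𝟙 (c ρ + v) - c I` (every row equal to `c ρ + v`, shifted by `-c` on the diagonal) has
nonnegative off-diagonal entries, zero row sums and `ρ Q = (∑ ρ)(c ρ + v) - c ρ = v`.
Taking `c(t) = ∑ⱼ |vⱼ(t)| / ρⱼ(t)`, which is continuous because `ρ > 0` and `ρ ∈ C¹`,
gives a continuous family.
-/

open Matrix

section RateMatrix

variable {ι : Type*} [DecidableEq ι]

def rateMatrixOf (p v : ι → ℝ) (c : ℝ) : Matrix ι ι ℝ :=
  Matrix.of fun i j => c * p j + v j - if i = j then c else 0

theorem vecMul_rateMatrixOf [Fintype ι] {p : ι → ℝ} (hp : ∑ i, p i = 1) (v : ι → ℝ) (c : ℝ) :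
    p ᵥ* rateMatrixOf p v c = v := by
  ext j
  simp only [rateMatrixOf, vecMul, dotProduct, of_apply, mul_sub, Finset.sum_sub_distrib,
    ← Finset.sum_mul, hp, one_mul, mul_ite, mul_zero, Finset.sum_ite_eq', Finset.mem_univ,
    if_true]
  ring

theorem sum_rateMatrixOf_row [Fintype ι] {p v : ι → ℝ} (hp : ∑ i, p i = 1) (hv : ∑ i, v i = 0)
    (c : ℝ) (i : ι) : ∑ j, rateMatrixOf p v c i j = 0 := by
  simp only [rateMatrixOf, of_apply, Finset.sum_sub_distrib, Finset.sum_add_distrib,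
    ← Finset.mul_sum, hp, hv, Finset.sum_ite_eq, Finset.mem_univ, if_true]
  ring

theorem rateMatrixOf_nonneg_of_ne {p v : ι → ℝ} {c : ℝ} (hc : ∀ j, |v j| ≤ c * p j)
    {i j : ι} (hij : i ≠ j) : 0 ≤ rateMatrixOf p v c i j := by
  simp only [rateMatrixOf, of_apply, if_neg hij, sub_zero]
  linarith [neg_abs_le (v j), hc j]

end RateMatrix

theorem abs_le_sum_abs_div_mul {ι : Type*} [Fintype ι] {p : ι → ℝ} (hp : ∀ i, 0 < p i)
    (v : ι → ℝ) (j : ι) : |v j| ≤ (∑ k, |v k| / p k) * p j := by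
  calc |v j| = |v j| / p j * p j := (div_mul_cancel₀ _ (hp j).ne').symm
    _ ≤ (∑ k, |v k| / p k) * p j := by
      gcongr
      · exact (hp j).le
      · exact Finset.single_le_sum (fun k _ => div_nonneg (abs_nonneg _) (hp k).le)
          (Finset.mem_univ j)

theorem sum_deriv_eq_zero_of_sum_eq_one {ι : Type*} [Fintype ι] {ρ : ℝ → ι → ℝ}
    (hρ : ∀ i, Differentiable ℝ fun t => ρ t i) (hsum : ∀ t, ∑ i, ρ t i = 1) (t : ℝ) :
    ∑ i, deriv (fun τ => ρ τ i) t = 0 := by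
  have hsum_deriv : HasDerivAt (fun τ => ∑ i, ρ τ i) (∑ i, deriv (fun τ => ρ τ i) t) t :=
    HasDerivAt.fun_sum fun i _ => (hρ i t).hasDerivAt
  simp only [hsum] at hsum_deriv
  exact hsum_deriv.unique (hasDerivAt_const t 1)

theorem periodic_density_realized_by_markov_general {n : ℕ}
    (ρ : ℝ → Fin n → ℝ)
    (hC1 : ∀ i, ContDiff ℝ 1 fun t => ρ t i)
    (hpos : ∀ t i, 0 < ρ t i)
    (hsum : ∀ t, ∑ i, ρ t i = 1) :
    ∃ Q : ℝ → Matrix (Fin n) (Fin n) ℝ,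
      (∀ i j, Continuous fun t => Q t i j) ∧
      (∀ t i j, i ≠ j → 0 ≤ Q t i j) ∧
      (∀ t i, ∑ j, Q t i j = 0) ∧
      (∀ t i, HasDerivAt (fun τ => ρ τ i) ((ρ t ᵥ* Q t) i) t) := by
  set v : ℝ → Fin n → ℝ := fun t i => deriv (fun τ => ρ τ i) t
  set c : ℝ → ℝ := fun t => ∑ k, |v t k| / ρ t k
  have hdiff : ∀ i, Differentiable ℝ fun t => ρ t i := fun i => (hC1 i).differentiable one_ne_zero
  have hρ_cont : ∀ i, Continuous fun t => ρ t i := fun i => (hC1 i).continuous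
  have hv_cont : ∀ i, Continuous fun t => v t i := fun i => (hC1 i).continuous_deriv le_rfl
  have hc_cont : Continuous c := continuous_finsetSum _ fun k _ =>
    (hv_cont k).abs.div (hρ_cont k) fun t => (hpos t k).ne'
  refine ⟨fun t => rateMatrixOf (ρ t) (v t) (c t), fun i j => ?_,
    fun t i j hij => rateMatrixOf_nonneg_of_ne (abs_le_sum_abs_div_mul (hpos t) (v t)) hij,
    fun t => sum_rateMatrixOf_row (hsum t) (sum_deriv_eq_zero_of_sum_eq_one hdiff hsum t) _,
    fun t i => ?_⟩
  · simp only [rateMatrixOf, of_apply]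
    split_ifs <;> fun_prop
  · rw [vecMul_rateMatrixOf (hsum t)]
    exact (hdiff i t).hasDerivAt

/-- Every C¹, `T`-periodic density trajectory lying in the interior of the
probability simplex over a fully connected graph on `n ≥ 2` vertices is realized as the
marginal law of a time-inhomogeneous Markov process: there is a continuous family `Q(t)`
of transition rate matrices with `ρ̇(t) = ρ(t) Q(t)`. -/
theorem periodic_density_realized_by_markov {n : ℕ} (hn : 2 ≤ n)
    (T : ℝ) (hT : 0 < T)
    (ρ : ℝ → Fin n → ℝ)
    (hC1 : ∀ i, ContDiff ℝ 1 fun t => ρ t i)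
    (hper : ∀ t, ρ (t + T) = ρ t)
    (hpos : ∀ t i, 0 < ρ t i)
    (hsum : ∀ t, ∑ i, ρ t i = 1) :
    ∃ Q : ℝ → Matrix (Fin n) (Fin n) ℝ,
      (∀ i j, Continuous fun t => Q t i j) ∧
      (∀ t i j, i ≠ j → 0 ≤ Q t i j) ∧
      (∀ t i, ∑ j, Q t i j = 0) ∧
      (∀ t i, HasDerivAt (fun τ => ρ τ i) ((ρ t ᵥ* Q t) i) t) :=
  periodic_density_realized_by_markov_general ρ hC1 hpos hsum
end
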